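/- Let P be a nonzero real 3×3 skew-symmetric matrix and a, b ∈ ℝ³ vectors with P b = 0 and b ≠ 0. Then P a + g(a) b = 0 if and only if g(a) b = 0. (A regular point with dS ≠ 0 is an equilibrium of the metriplectic system ẋ = PdH + gdS if and only if it is an equilibrium of the gradient system ẋ = gdS.) -/

import Mathlib

open Matrix RealInnerProductSpace

/-!
Write `g(a) b = ⟨a, b⟩ a - ‖a‖² b`. Pairing the metriplectic equation with `b` kills `P a`,
since `⟨b, P a⟩ = -⟨P b, a⟩ = 0`; and `⟨b, g(a) b⟩ = 0` forces `g(a) b = 0` because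
`‖g(a) b‖² = -‖a‖² ⟨b, g(a) b⟩`. Conversely, `g(a) b = 0` with `b ≠ 0` makes `a` a multiple
of `b`, so `P a = 0`.
-/

/-- The dissipative tensor `g(a) = a ⊗ a − ‖a‖² I` of the paper, as a 3×3 matrix;
it acts by `g(a) v = ⟨a, v⟩ a − ‖a‖² v`. -/
noncomputable def gmat (a : EuclideanSpace ℝ (Fin 3)) : Matrix (Fin 3) (Fin 3) ℝ :=
  Matrix.vecMulVec a a - (‖a‖ ^ 2) • 1

section DotProduct

variable {n R : Type*} [Fintype n]

theorem dotProduct_mulVec_eq_zero_of_transpose_eq_neg [CommRing R] {P : Matrix n n R}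
    (hP : Pᵀ = -P) {b : n → R} (hb : P *ᵥ b = 0) (a : n → R) : b ⬝ᵥ P *ᵥ a = 0 := by
  rw [dotProduct_mulVec, ← mulVec_transpose, hP, neg_mulVec, hb, neg_zero, zero_dotProduct]

theorem vecMulVec_self_mulVec [CommSemiring R] (a b : n → R) :
    vecMulVec a a *ᵥ b = (a ⬝ᵥ b) • a := by
  rw [vecMulVec_mulVec, op_smul_eq_smul]

theorem dotProduct_self_smul_sub_smul [CommRing R] (a b : n → R) :
    let r := (a ⬝ᵥ b) • a - (a ⬝ᵥ a) • b
    r ⬝ᵥ r = -(a ⬝ᵥ a) * (b ⬝ᵥ r) := by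
  simp only [dotProduct_sub, sub_dotProduct, dotProduct_smul, smul_dotProduct, smul_eq_mul,
    dotProduct_comm b a]
  ring

variable [Field R] [LinearOrder R] [IsStrictOrderedRing R]

theorem smul_sub_smul_eq_zero_of_dotProduct_eq_zero {a b : n → R}
    (h : b ⬝ᵥ ((a ⬝ᵥ b) • a - (a ⬝ᵥ a) • b) = 0) : (a ⬝ᵥ b) • a - (a ⬝ᵥ a) • b = 0 := by
  rw [← dotProduct_self_eq_zero, dotProduct_self_smul_sub_smul, h, mul_zero]

theorem exists_eq_smul_of_smul_sub_smul_eq_zero {a b : n → R} (hb : b ≠ 0)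
    (h : (a ⬝ᵥ b) • a - (a ⬝ᵥ a) • b = 0) : ∃ c : R, a = c • b := by
  rw [sub_eq_zero] at h
  by_cases hab : a ⬝ᵥ b = 0
  · rw [hab, zero_smul, eq_comm, smul_eq_zero, dotProduct_self_eq_zero] at h
    exact ⟨0, by rw [h.resolve_right hb, zero_smul]⟩
  · exact ⟨(a ⬝ᵥ b)⁻¹ * (a ⬝ᵥ a), by rw [mul_smul, ← h, inv_smul_smul₀ hab]⟩

end DotProduct

theorem gmat_mulVec (a b : EuclideanSpace ℝ (Fin 3)) :
    gmat a *ᵥ b = (a ⬝ᵥ b : ℝ) • (a : Fin 3 → ℝ) - (a ⬝ᵥ a : ℝ) • (b : Fin 3 → ℝ) := by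
  rw [gmat, sub_mulVec, smul_mulVec, one_mulVec, vecMulVec_self_mulVec,
    ← real_inner_self_eq_norm_sq, EuclideanSpace.inner_eq_star_dotProduct, star_trivial]

theorem metriplectic_equilibrium_iff_gradient_general (P : Matrix (Fin 3) (Fin 3) ℝ) (hP : Pᵀ = -P)
    (a b : EuclideanSpace ℝ (Fin 3)) (hb : P *ᵥ b = 0) (hb0 : b ≠ 0) :
    P *ᵥ a + gmat a *ᵥ b = 0 ↔ gmat a *ᵥ b = 0 := by
  rw [gmat_mulVec]
  constructor
  · intro h
    apply smul_sub_smul_eq_zero_of_dotProduct_eq_zero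
    simpa only [dotProduct_add, dotProduct_mulVec_eq_zero_of_transpose_eq_neg hP hb, zero_add,
      dotProduct_zero] using congrArg (b ⬝ᵥ ·) h
  · intro h
    obtain ⟨c, hc⟩ := exists_eq_smul_of_smul_sub_smul_eq_zero (by simpa using hb0) h
    rw [h, add_zero, hc, mulVec_smul, hb, smul_zero]

/-- A regular point with `dS ≠ 0` is an equilibrium of the metriplectic system iff it is an
equilibrium of the gradient system. -/
theorem metriplectic_equilibrium_iff_gradient (P : Matrix (Fin 3) (Fin 3) ℝ) (hP : Pᵀ = -P)
    (hP0 : P ≠ 0) (a b : EuclideanSpace ℝ (Fin 3)) (hb : P *ᵥ b = 0) (hb0 : b ≠ 0) :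
    P *ᵥ a + gmat a *ᵥ b = 0 ↔ gmat a *ᵥ b = 0 :=
  metriplectic_equilibrium_iff_gradient_general P hP a b hb hb0
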